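/- arXiv:2308.10448 — 2 statements merged into one kernel-verified Lean document; each statement's English description precedes it below -/
import Mathlib

section
/- Let B ∈ ℝ^{n×d} be a polydiagonal basis matrix (entries in {−1,0,1}, at most one nonzero per row, rank d), let f : ℝ^k → ℝ^k be an odd function, and define F : (ℝ^k)ⁿ → (ℝ^k)ⁿ componentwise by F(x)_i = f(x_i). Then for all y ∈ (ℝ^k)^d and all ℓ, (B⁺F(By))_ℓ = f(y_ℓ), where B⁺ = (BᵀB)⁻¹Bᵀ acts blockwise. -/
/-!
Since each row of `B` has at most one nonzero entry, the columns of `B` have disjoint supports,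
so `BᵀB` is the diagonal matrix of squared column norms `c`, invertible because `B` has full
column rank; hence `(B⁺ x)_ℓ = c_ℓ⁻¹ ∑ᵢ B_{iℓ} xᵢ`. Row `i` of `By` is `B_{iℓ} y_ℓ` for the only
`ℓ` with `B_{iℓ} ≠ 0`, and oddness of `f` gives `f(±y_ℓ) = ±f(y_ℓ)`, so
`B_{iℓ} f((By)ᵢ) = B_{iℓ}² f(y_ℓ)`; summing over `i` gives `c_ℓ f(y_ℓ)`.
-/

open Matrix

theorem map_smul_of_odd {R E F : Type*} [Ring R] [AddCommGroup E] [Module R E]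
    [AddCommGroup F] [Module R F] {f : E → F} (hodd : ∀ v, f (-v) = -f v) {b : R}
    (hb : b = -1 ∨ b = 1) (v : E) : f (b • v) = b • f v := by
  rcases hb with rfl | rfl <;> simp [hodd]

theorem smul_map_sum_smul_of_odd {R E F ι : Type*} [Ring R] [AddCommGroup E] [Module R E]
    [AddCommGroup F] [Module R F] [Fintype ι] {f : E → F} (hodd : ∀ v, f (-v) = -f v)
    {b : ι → R} (hsupp : ∀ j m, b j ≠ 0 → b m ≠ 0 → j = m) {ℓ : ι}
    (hb : b ℓ = -1 ∨ b ℓ = 0 ∨ b ℓ = 1) (y : ι → E) :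
    b ℓ • f (∑ m, b m • y m) = (b ℓ * b ℓ) • f (y ℓ) := by
  by_cases h0 : b ℓ = 0
  · simp [h0]
  have hsum : ∑ m, b m • y m = b ℓ • y ℓ :=
    Finset.sum_eq_single ℓ (fun m _ hm => by
      by_contra h
      exact hm (hsupp m ℓ (left_ne_zero_of_smul h) h0)) (by simp)
  have hsign : b ℓ = -1 ∨ b ℓ = 1 := by tauto
  rw [hsum, map_smul_of_odd hodd hsign, mul_smul]

namespace Matrix

variable {m n R : Type*} [Fintype m] [DecidableEq n]

theorem transpose_mul_self_eq_diagonal [Semiring R] {B : Matrix m n R}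
    (hsupp : ∀ i j j', B i j ≠ 0 → B i j' ≠ 0 → j = j') :
    Bᵀ * B = diagonal fun j => ∑ i, B i j * B i j := by
  ext j j'
  rcases eq_or_ne j j' with rfl | hne
  · simp [mul_apply]
  · rw [diagonal_apply_ne _ hne, mul_apply]
    refine Finset.sum_eq_zero fun i _ => ?_
    by_contra h
    exact hne (hsupp i j j' (left_ne_zero_of_mul h) (right_ne_zero_of_mul h))

variable [Fintype n]

theorem ne_zero_of_rank_diagonal_eq_card {K : Type*} [Field K] [DecidableEq K] {c : n → K}
    (h : (diagonal c).rank = Fintype.card n) (j : n) : c j ≠ 0 := by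
  by_contra hj
  have := Fintype.card_subtype_lt (p := fun j => c j ≠ 0) (not_not.mpr hj)
  rw [← rank_diagonal] at this
  omega

theorem inv_transpose_mul_self_mul_transpose_apply {K : Type*} [Field K] {B : Matrix m n K}
    {c : n → K} (hB : Bᵀ * B = diagonal c) (hc : ∀ j, c j ≠ 0) (ℓ : n) (i : m) :
    ((Bᵀ * B)⁻¹ * Bᵀ) ℓ i = (c ℓ)⁻¹ * B i ℓ := by
  have hinv : (diagonal c)⁻¹ = diagonal fun j => (c j)⁻¹ :=
    inv_eq_right_inv (by simp [diagonal_mul_diagonal, hc])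
  rw [hB, hinv, diagonal_mul, transpose_apply]

end Matrix

/-- Proposition (uncoupled cells, odd internal dynamics): for a polydiagonal basis
matrix `B` and an odd `f : ℝᵏ → ℝᵏ`, the uncoupled map `F(x)ᵢ = f(xᵢ)` restricted to
the invariant subspace satisfies `(B⁺ F(By))_ℓ = f(y_ℓ)`. -/
theorem uncoupled_restriction_odd {n d k : ℕ} (B : Matrix (Fin n) (Fin d) ℝ)
    (hentries : ∀ i j, B i j = -1 ∨ B i j = 0 ∨ B i j = 1)
    (hrow : ∀ i, (Finset.univ.filter fun j => B i j ≠ 0).card ≤ 1)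
    (hrank : B.rank = d)
    (f : (Fin k → ℝ) → (Fin k → ℝ)) (hodd : ∀ v, f (-v) = -f v) :
    ∀ (y : Fin d → (Fin k → ℝ)) (ℓ : Fin d),
      (∑ i : Fin n, ((Bᵀ * B)⁻¹ * Bᵀ) ℓ i • f (∑ m : Fin d, B i m • y m)) = f (y ℓ) := by
  intro y ℓ
  have hsupp : ∀ i j j', B i j ≠ 0 → B i j' ≠ 0 → j = j' := fun i j j' hj hj' =>
    Finset.card_le_one.mp (hrow i) j (by simpa using hj) j' (by simpa using hj')
  set c : Fin d → ℝ := fun j => ∑ i, B i j * B i j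
  have hdiag : Bᵀ * B = diagonal c := transpose_mul_self_eq_diagonal hsupp
  have hc : ∀ j, c j ≠ 0 := ne_zero_of_rank_diagonal_eq_card <| by
    rw [← hdiag, rank_transpose_mul_self, hrank, Fintype.card_fin]
  calc ∑ i, ((Bᵀ * B)⁻¹ * Bᵀ) ℓ i • f (∑ m, B i m • y m)
      = (c ℓ)⁻¹ • ∑ i, B i ℓ • f (∑ m, B i m • y m) := by
        simp only [inv_transpose_mul_self_mul_transpose_apply hdiag hc, mul_smul, Finset.smul_sum]
    _ = (c ℓ)⁻¹ • ∑ i, (B i ℓ * B i ℓ) • f (y ℓ) := by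
        simp only [smul_map_sum_smul_of_odd hodd (hsupp _) (hentries _ ℓ)]
    _ = f (y ℓ) := by rw [← Finset.sum_smul, inv_smul_smul₀ (hc ℓ)]
end

section
/- Let M ∈ ℝ^{n×n}, H ∈ ℝ^{k×k}, f : ℝ × ℝ^k → ℝ^k, and B ∈ ℝ^{n×d} a polydiagonal basis matrix with col(B) M-invariant. Define F(s,x)_i = f(s, x_i) + H·(Mx)_i. If f(s,·) is odd for each s (or B is a synchrony basis matrix), then the restricted map F_B(s,y) := B⁺F(s, By) satisfies F_B(s,y)_ℓ = f(s, y_ℓ) + H·((B⁺MB)y)_ℓ for all ℓ. -/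
/-!
Since every row of `B` has at most one nonzero entry, `BᵀB` is diagonal with entries
`wₗ = ∑ᵢ Bᵢₗ²`, nonzero because `B` has full column rank, so `B⁺ₗᵢ = Bᵢₗ / wₗ`; moreover
`(By)ᵢ = Bᵢₗ yₗ` whenever `Bᵢₗ ≠ 0`. For `Bᵢₗ ∈ {-1, 0, 1}` one has
`Bᵢₗ f(s, Bᵢₗ yₗ) = Bᵢₗ² f(s, yₗ)`, using oddness of `f(s, ·)` when `Bᵢₗ = -1` (for a synchrony
basis matrix that case does not occur), so the internal dynamics average back to `f(s, yₗ)`.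
The coupling term is linear, and restricts by associativity of matrix multiplication.
-/

open Matrix

section RowSparse

variable {ι κ R : Type*}

lemma Matrix.transpose_mul_self_eq_diagonal_s15 [Fintype ι] [DecidableEq κ] [Semiring R]
    {B : Matrix ι κ R} (hB : ∀ i j j', B i j ≠ 0 → B i j' ≠ 0 → j = j') :
    Bᵀ * B = diagonal fun j => ∑ i, B i j ^ 2 := by
  ext a b
  rw [mul_apply, diagonal_apply]
  split_ifs with hab
  · simp [hab, sq]
  · refine Finset.sum_eq_zero fun i _ => ?_
    by_contra hne
    exact hab (hB i a b (left_ne_zero_of_mul hne) (right_ne_zero_of_mul hne))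

lemma Matrix.sum_smul_row_eq_of_ne_zero [Fintype κ] [Semiring R] {V : Type*} [AddCommMonoid V]
    [Module R V] {B : Matrix ι κ R} (hB : ∀ i j j', B i j ≠ 0 → B i j' ≠ 0 → j = j')
    (y : κ → V) {i : ι} {ℓ : κ} (hiℓ : B i ℓ ≠ 0) :
    ∑ m, B i m • y m = B i ℓ • y ℓ :=
  Fintype.sum_eq_single ℓ fun m hm => by
    rw [not_ne_iff.mp fun h => hm (hB i m ℓ h hiℓ), zero_smul]

lemma Matrix.ne_neg_one_of_exists_eq_one [Ring R] [CharZero R] {B : Matrix ι κ R}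
    (hB : ∀ i j j', B i j ≠ 0 → B i j' ≠ 0 → j = j') {i : ι} (hi : ∃ j₁, B i j₁ = 1) (j : κ) :
    B i j ≠ -1 := by
  intro hj
  obtain ⟨j₁, hj₁⟩ := hi
  obtain rfl := hB i j j₁ (by simp [hj]) (by simp [hj₁])
  exact (by norm_num : (-1 : R) ≠ 1) (hj.symm.trans hj₁)

end RowSparse

lemma smul_apply_smul_eq_sq_smul {R V W : Type*} [Ring R] [AddCommGroup V] [Module R V]
    [AddCommGroup W] [Module R W] {b : R} (hb : b = -1 ∨ b = 0 ∨ b = 1) {g : V → W} {v : V}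
    (hodd : b = -1 → g (-v) = -g v) :
    b • g (b • v) = b ^ 2 • g v := by
  rcases hb with rfl | rfl | rfl
  · simp [hodd rfl]
  · simp
  · simp

section Pseudoinverse

variable {ι κ : Type*} [Fintype ι] [Fintype κ] [DecidableEq κ] {B : Matrix ι κ ℝ}

lemma Matrix.sum_sq_col_ne_zero_of_row_sparse (hB : ∀ i j j', B i j ≠ 0 → B i j' ≠ 0 → j = j')
    (hrank : B.rank = Fintype.card κ) (j : κ) : ∑ i, B i j ^ 2 ≠ 0 := by
  intro hj
  have hBB := rank_transpose_mul_self B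
  rw [transpose_mul_self_eq_diagonal_s15 hB, rank_diagonal, hrank] at hBB
  exact (Fintype.card_subtype_lt (p := fun j => ∑ i, B i j ^ 2 ≠ 0) (not_not.mpr hj)).ne hBB

lemma Matrix.pinv_apply_of_row_sparse (hB : ∀ i j j', B i j ≠ 0 → B i j' ≠ 0 → j = j')
    (hrank : B.rank = Fintype.card κ) (ℓ : κ) (i : ι) :
    ((Bᵀ * B)⁻¹ * Bᵀ) ℓ i = (∑ i, B i ℓ ^ 2)⁻¹ * B i ℓ := by
  have hcol := sum_sq_col_ne_zero_of_row_sparse hB hrank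
  have hinv : (diagonal fun j => ∑ i, B i j ^ 2)⁻¹ = diagonal fun j => (∑ i, B i j ^ 2)⁻¹ :=
    inv_eq_right_inv <| by
      rw [diagonal_mul_diagonal, ← diagonal_one]
      exact congrArg diagonal (funext fun j => mul_inv_cancel₀ (hcol j))
  rw [transpose_mul_self_eq_diagonal_s15 hB, hinv, diagonal_mul, transpose_apply]

lemma Matrix.sum_pinv_smul_apply_sum_smul {V W : Type*} [AddCommGroup V] [Module ℝ V]
    [AddCommGroup W] [Module ℝ W] (hsign : ∀ i j, B i j = -1 ∨ B i j = 0 ∨ B i j = 1)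
    (hB : ∀ i j j', B i j ≠ 0 → B i j' ≠ 0 → j = j') (hrank : B.rank = Fintype.card κ)
    (g : V → W) (y : κ → V) (ℓ : κ) (hodd : ∀ i, B i ℓ = -1 → g (-y ℓ) = -g (y ℓ)) :
    ∑ i, ((Bᵀ * B)⁻¹ * Bᵀ) ℓ i • g (∑ m, B i m • y m) = g (y ℓ) := by
  have hterm : ∀ i, B i ℓ • g (∑ m, B i m • y m) = B i ℓ ^ 2 • g (y ℓ) := by
    intro i
    by_cases hiℓ : B i ℓ = 0
    · simp [hiℓ]
    · rw [sum_smul_row_eq_of_ne_zero hB y hiℓ, smul_apply_smul_eq_sq_smul (hsign i ℓ) (hodd i)]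
  calc ∑ i, ((Bᵀ * B)⁻¹ * Bᵀ) ℓ i • g (∑ m, B i m • y m)
      = (∑ i, B i ℓ ^ 2)⁻¹ • (∑ i, B i ℓ ^ 2) • g (y ℓ) := by
        simp only [pinv_apply_of_row_sparse hB hrank, mul_smul, hterm, Finset.sum_smul,
          Finset.smul_sum]
    _ = g (y ℓ) := inv_smul_smul₀ (sum_sq_col_ne_zero_of_row_sparse hB hrank ℓ) _

end Pseudoinverse

lemma Matrix.sum_smul_eq_mul_apply {ι κ μ R : Type*} [Fintype κ] [Semiring R] (A : Matrix ι κ R)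
    (Y : Matrix κ μ R) (i : ι) : ∑ j, A i j • Y j = (A * Y) i := by
  rw [mul_apply_eq_vecMul, vecMul_eq_sum]

lemma Matrix.sum_smul_mulVec_sum_smul_sum_smul {ι ι' κ κ' p R : Type*} [Fintype ι] [Fintype ι']
    [Fintype κ] [Fintype p] [CommSemiring R] (P : Matrix κ' ι R) (M : Matrix ι ι' R)
    (B : Matrix ι' κ R) (H : Matrix p p R) (y : Matrix κ p R) (ℓ : κ') :
    ∑ i, P ℓ i • H *ᵥ (∑ j, M i j • ∑ m, B j m • y m) = H *ᵥ ∑ m, (P * M * B) ℓ m • y m := by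
  simp only [sum_smul_eq_mul_apply, ← mulVec_smul, ← mulVec_sum, Matrix.mul_assoc]

theorem coupled_restriction_general {n d k : ℕ} (M : Matrix (Fin n) (Fin n) ℝ)
    (H : Matrix (Fin k) (Fin k) ℝ) (f : ℝ → (Fin k → ℝ) → (Fin k → ℝ))
    (B : Matrix (Fin n) (Fin d) ℝ)
    (hentries : ∀ i j, B i j = -1 ∨ B i j = 0 ∨ B i j = 1)
    (hrow : ∀ i, (Finset.univ.filter fun j => B i j ≠ 0).card ≤ 1)
    (hrank : B.rank = d)
    (hcase : (∀ s v, f s (-v) = -f s v) ∨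
      (∀ i, (Finset.univ.filter fun j => B i j = 1).card = 1)) :
    ∀ (s : ℝ) (y : Fin d → (Fin k → ℝ)) (ℓ : Fin d),
      (∑ i : Fin n, ((Bᵀ * B)⁻¹ * Bᵀ) ℓ i •
          (f s (∑ m : Fin d, B i m • y m) +
            H.mulVec (∑ j : Fin n, M i j • (∑ m : Fin d, B j m • y m)))) =
        f s (y ℓ) + H.mulVec (∑ m : Fin d, (((Bᵀ * B)⁻¹ * Bᵀ) * M * B) ℓ m • y m) := by
  intro s y ℓ
  have hB : ∀ i j j', B i j ≠ 0 → B i j' ≠ 0 → j = j' := fun i j j' hj hj' =>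
    Finset.card_le_one.mp (hrow i) j (by simpa using hj) j' (by simpa using hj')
  have hodd : ∀ i, B i ℓ = -1 → f s (-y ℓ) = -f s (y ℓ) := by
    rcases hcase with hodd | hsync
    · exact fun _ _ => hodd s (y ℓ)
    · intro i hi
      obtain ⟨j₁, hj₁⟩ := Finset.card_pos.mp ((hsync i).symm ▸ one_pos)
      exact absurd hi (ne_neg_one_of_exists_eq_one hB ⟨j₁, (Finset.mem_filter.mp hj₁).2⟩ ℓ)
  simp only [smul_add, Finset.sum_add_distrib]
  rw [sum_pinv_smul_apply_sum_smul hentries hB (by simpa using hrank) (f s) y ℓ hodd,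
    sum_smul_mulVec_sum_smul_sum_smul _ M B H y ℓ]

/-- Proposition (restriction of a coupled cell system): for a polydiagonal basis
matrix `B` with `col(B)` `M`-invariant, and `F(s,x)ᵢ = f(s,xᵢ) + H·(Mx)ᵢ`, if
`f(s,·)` is odd for each `s` or `B` is a synchrony basis matrix, then
`F_B(s,y)_ℓ = f(s,y_ℓ) + H·((B⁺MB)y)_ℓ`. -/
theorem coupled_restriction {n d k : ℕ} (M : Matrix (Fin n) (Fin n) ℝ)
    (H : Matrix (Fin k) (Fin k) ℝ) (f : ℝ → (Fin k → ℝ) → (Fin k → ℝ))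
    (B : Matrix (Fin n) (Fin d) ℝ)
    (hentries : ∀ i j, B i j = -1 ∨ B i j = 0 ∨ B i j = 1)
    (hrow : ∀ i, (Finset.univ.filter fun j => B i j ≠ 0).card ≤ 1)
    (hrank : B.rank = d)
    (hMinv : LinearMap.range (M * B).mulVecLin ≤ LinearMap.range B.mulVecLin)
    (hcase : (∀ s v, f s (-v) = -f s v) ∨
      (∀ i, (Finset.univ.filter fun j => B i j = 1).card = 1)) :
    ∀ (s : ℝ) (y : Fin d → (Fin k → ℝ)) (ℓ : Fin d),
      (∑ i : Fin n, ((Bᵀ * B)⁻¹ * Bᵀ) ℓ i •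
          (f s (∑ m : Fin d, B i m • y m) +
            H.mulVec (∑ j : Fin n, M i j • (∑ m : Fin d, B j m • y m)))) =
        f s (y ℓ) + H.mulVec (∑ m : Fin d, (((Bᵀ * B)⁻¹ * Bᵀ) * M * B) ℓ m • y m) :=
  coupled_restriction_general M H f B hentries hrow hrank hcase
end
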